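/- For every natural number n, every positive integer N, and every t ∈ [1/(N·2ⁿ + 2), 1/(N·2ⁿ + 2 − 2ⁿ)], one has g₂^[N](g₁^[n](t)) = ((N·2ⁿ + 2ⁿ + 2)·t − 1) / ((N·2ⁿ + 2^{n+1} + 2)·t − 1). -/

import Mathlib

/-- The element `g₁` of the Lodha–Moore group as a piecewise fractional linear map. -/
noncomputable def g₁ (t : ℝ) : ℝ :=
  if t ≤ 0 then t
  else if t ≤ 1 / 2 then 2 * t / (2 * t + 1)
  else if t ≤ 1 then 1 / (3 - 2 * t)
  else t

/-- The element `g₂` of the Lodha–Moore group as a piecewise fractional linear map. -/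
noncomputable def g₂ (t : ℝ) : ℝ :=
  if t ≤ 0 then t
  else if t ≤ 1 / 3 then t / (1 - t)
  else if t ≤ 1 / 2 then (4 * t - 1) / (5 * t - 1)
  else if t ≤ 1 then 1 / (2 - t)
  else t
/-! In the coordinate `u = 1 / t`, `g₁` acts on `u ≥ 2` as the contraction `u ↦ u / 2 + 1` towards
`2`, and `g₂` acts on `u ≥ 3` as the translation `u ↦ u - 1`. So `g₁^[n]` maps the reciprocal
interval `[N·2ⁿ + 2 − 2ⁿ, N·2ⁿ + 2]` affinely onto `[N + 1, N + 2]`, the first `N − 1` iterates of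
`g₂` then bring it to `[2, 3]`, and the last one uses the middle branch of `g₂`. -/

lemma g₁_inv_of_two_le {u : ℝ} (hu : 2 ≤ u) : g₁ u⁻¹ = (u / 2 + 1)⁻¹ := by
  have hpos : 0 < u⁻¹ := inv_pos.2 (by linarith)
  have hhalf : u⁻¹ ≤ 1 / 2 := by rw [one_div]; exact inv_anti₀ two_pos hu
  rw [g₁, if_neg hpos.not_ge, if_pos hhalf]
  field_simp
  ring

lemma g₂_inv_of_three_le {u : ℝ} (hu : 3 ≤ u) : g₂ u⁻¹ = (u - 1)⁻¹ := by
  have hpos : 0 < u⁻¹ := inv_pos.2 (by linarith)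
  have hthird : u⁻¹ ≤ 1 / 3 := by rw [one_div]; exact inv_anti₀ three_pos hu
  rw [g₂, if_neg hpos.not_ge, if_pos hthird]
  have hu1 : u - 1 ≠ 0 := by linarith
  field_simp

lemma g₂_inv_of_mem_Icc {w : ℝ} (hw : w ∈ Set.Icc 2 3) : g₂ w⁻¹ = (4 - w) / (5 - w) := by
  obtain ⟨h2, h3⟩ := hw
  rcases h3.eq_or_lt with rfl | h3
  · rw [g₂_inv_of_three_le le_rfl]; norm_num
  have hpos : 0 < w⁻¹ := inv_pos.2 (by linarith)
  have hthird : ¬ w⁻¹ ≤ 1 / 3 := by rw [one_div, not_le]; exact inv_strictAnti₀ (by linarith) h3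
  have hhalf : w⁻¹ ≤ 1 / 2 := by rw [one_div]; exact inv_anti₀ two_pos h2
  rw [g₂, if_neg hpos.not_ge, if_neg hthird, if_pos hhalf]
  have hw0 : w ≠ 0 := by linarith
  have hw5 : 5 - w ≠ 0 := by linarith
  field_simp

lemma g₁_iter_inv (n : ℕ) {u : ℝ} (hu : 2 ≤ u) : g₁^[n] u⁻¹ = ((u - 2) / 2 ^ n + 2)⁻¹ := by
  induction n generalizing u with
  | zero => simp
  | succ n ih =>
    rw [Function.iterate_succ_apply, g₁_inv_of_two_le hu, ih (by linarith)]
    congr 1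
    ring

lemma g₂_iter_inv (k : ℕ) {u : ℝ} (hu : k + 2 ≤ u) : g₂^[k] u⁻¹ = (u - k)⁻¹ := by
  induction k generalizing u with
  | zero => simp
  | succ k ih =>
    rw [Nat.cast_succ] at hu ⊢
    rw [Function.iterate_succ_apply, g₂_inv_of_three_le (by linarith), ih (by linarith)]
    congr 1
    ring

lemma g₂_iter_succ_inv (M : ℕ) {v : ℝ} (hv : v ∈ Set.Icc ((M : ℝ) + 2) (M + 3)) :
    g₂^[M + 1] v⁻¹ = (M + 4 - v) / (M + 5 - v) := by
  obtain ⟨hl, hr⟩ := hv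
  rw [Function.iterate_succ_apply', g₂_iter_inv M hl,
    g₂_inv_of_mem_Icc ⟨by linarith, by linarith⟩]
  ring

/-- Formula for `g₂^[N] ∘ g₁^[n]` on `[1/(N·2ⁿ + 2), 1/(N·2ⁿ + 2 − 2ⁿ)]`. -/
theorem g₂_iter_g₁_iter_formula₂ (n : ℕ) (N : ℕ) (hN : 0 < N) (t : ℝ)
    (ht : t ∈ Set.Icc (1 / ((N : ℝ) * 2 ^ n + 2)) (1 / ((N : ℝ) * 2 ^ n + 2 - 2 ^ n))) :
    g₂^[N] (g₁^[n] t)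
      = (((N : ℝ) * 2 ^ n + 2 ^ n + 2) * t - 1)
        / (((N : ℝ) * 2 ^ n + 2 ^ (n + 1) + 2) * t - 1) := by
  obtain ⟨M, rfl⟩ : ∃ M, N = M + 1 := ⟨N - 1, by omega⟩
  have hpow : (0 : ℝ) < 2 ^ n := by positivity
  have hlow : (0 : ℝ) < ((M + 1 : ℕ) : ℝ) * 2 ^ n + 2 - 2 ^ n := by push_cast; nlinarith
  have ht0 : 0 < t := (by positivity : (0 : ℝ) < 1 / _).trans_le ht.1
  obtain ⟨u, rfl⟩ : ∃ u, t = u⁻¹ := ⟨t⁻¹, (inv_inv t).symm⟩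
  have hu0 : 0 < u := inv_pos.1 ht0
  rw [Set.mem_Icc, one_div, one_div, inv_le_inv₀ (by positivity) hu0, inv_le_inv₀ hu0 hlow] at ht
  obtain ⟨hu_le, le_hu⟩ := ht
  push_cast at hu_le le_hu hlow ⊢
  have hM : (M : ℝ) ≤ (u - 2) / 2 ^ n := by rw [le_div_iff₀ hpow]; linarith
  have hM' : (u - 2) / 2 ^ n ≤ M + 1 := by rw [div_le_iff₀ hpow]; linarith
  rw [g₁_iter_inv n (by nlinarith), g₂_iter_succ_inv M ⟨by linarith, by linarith⟩,
    pow_succ' 2 n]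
  field_simp
  ring
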